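/- arXiv:2501.00578 — 9 statements merged into one kernel-verified Lean document; each statement's English description precedes it below -/
import Mathlib

section
/- For positive integers p and q with p + q ≤ n + 1, the endpoint rule f^{p,q} is well-defined: for every profile S of n bounded nonempty open intervals of ℝ, the p-th smallest lower endpoint is strictly less than the q-th largest upper endpoint, so f^{p,q}(S) is a bounded nonempty open interval. -/
/-- A bounded open nonempty interval of ℝ, given by endpoints `lo < hi`. -/
structure OInt where
  lo : ℝ
  hi : ℝ
  lt : lo < hi

/-- The set of points of the interval. -/
def OInt.toSet (I : OInt) : Set ℝ := Set.Ioo I.lo I.hi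

/-- Number of agents whose interval contains a point ≤ x, i.e. |{i : (-∞,x] ∩ S_i ≠ ∅}|. -/
noncomputable def lowCount {n : ℕ} (S : Fin n → OInt) (x : ℝ) : ℕ :=
  (Finset.univ.filter fun i => (S i).lo < x).card

/-- Number of agents whose interval contains a point ≥ x, i.e. |{i : [x,∞) ∩ S_i ≠ ∅}|. -/
noncomputable def highCount {n : ℕ} (S : Fin n → OInt) (x : ℝ) : ℕ :=
  (Finset.univ.filter fun i => x < (S i).hi).card

/-- The endpoint rule f^{p,q}, as a set:
    {x : |{i : (-∞,x] ∩ S_i ≠ ∅}| ≥ p and |{i : [x,∞) ∩ S_i ≠ ∅}| ≥ q}. -/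
def eprSet {n : ℕ} (p q : ℕ) (S : Fin n → OInt) : Set ℝ :=
  {x | p ≤ lowCount S x ∧ q ≤ highCount S x}

/-- The k-th smallest (1-indexed) value of a finite family of reals. -/
noncomputable def kthSmall {n : ℕ} (a : Fin n → ℝ) (k : ℕ) : ℝ :=
  (List.insertionSort (· ≤ ·) (List.ofFn a)).getD (k - 1) 0

/-- The k-th largest (1-indexed) value of a finite family of reals. -/
noncomputable def kthLarge {n : ℕ} (a : Fin n → ℝ) (k : ℕ) : ℝ :=
  (List.insertionSort (· ≤ ·) (List.ofFn a)).getD (n - k) 0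


/-! For a point `x`, the `k`-th smallest value of a family lies below `x` exactly when at least
`k` values do, and dually for the `k`-th largest. Every interval `(lo, hi)` has `lo < x` or
`x < hi`, so at each `x` the two counts add up to at least `n ≥ p + q - 1`; evaluated at the
`q`-th largest upper endpoint, where fewer than `q` upper endpoints lie strictly above, this
forces at least `p` lower endpoints strictly below it. -/

theorem List.Pairwise.lt_countP_iff {α : Type*} [Preorder α] {l : List α}
    (hl : l.Pairwise (· ≤ ·)) {P : α → Bool} (hP : ∀ y z, y ≤ z → P z → P y) {k : ℕ}
    (hk : k < l.length) : k < l.countP P ↔ P l[k] := by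
  induction l generalizing k with
  | nil => simp at hk
  | cons a t ih =>
    have ha : ∀ y ∈ t, P y → P a := fun y hy => hP a y (List.rel_of_pairwise_cons hl hy)
    rcases k with _ | k
    · simp only [List.countP_pos_iff, List.getElem_cons_zero]
      exact ⟨fun ⟨y, hy, hPy⟩ => (List.mem_cons.mp hy).elim (· ▸ hPy) (ha y · hPy),
        fun h => ⟨a, List.mem_cons_self, h⟩⟩
    · rw [List.getElem_cons_succ, ← ih hl.of_cons (by simpa using hk), List.countP_cons]
      by_cases hPa : P a
      · simp [hPa]
      · have hzero : t.countP P = 0 :=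
          List.countP_eq_zero.mpr fun y hy hPy => hPa (ha y hy hPy)
        simp [hPa, hzero]

theorem Fin.card_filter_univ_eq_countP_ofFn {α : Type*} {n : ℕ} (a : Fin n → α) (P : α → Prop)
    [DecidablePred P] :
    (Finset.univ.filter fun i => P (a i)).card = (List.ofFn a).countP (fun y => decide (P y)) := by
  rw [Finset.card_def, Finset.filter_val, ← Multiset.countP_map, Fin.univ_val_map,
    Multiset.coe_countP]

theorem lt_card_filter_iff_kthSmall {n : ℕ} (a : Fin n → ℝ) {P : ℝ → Prop} [DecidablePred P]
    (hP : ∀ y z, y ≤ z → P z → P y) {k : ℕ} (hk : k < n) :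
    k < (Finset.univ.filter fun i => P (a i)).card ↔ P (kthSmall a (k + 1)) := by
  rw [kthSmall, Nat.add_sub_cancel, List.getD_eq_getElem _ _ (by simpa using hk),
    Fin.card_filter_univ_eq_countP_ofFn, ← (List.perm_insertionSort (· ≤ ·) _).countP_eq,
    (List.pairwise_insertionSort (· ≤ ·) _).lt_countP_iff (by simpa using hP), decide_eq_true_eq]

theorem kthLarge_eq_kthSmall {n : ℕ} (a : Fin n → ℝ) (k : ℕ) :
    kthLarge a k = kthSmall a (n - k + 1) := by
  simp only [kthLarge, kthSmall, Nat.add_sub_cancel]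

theorem le_card_filter_lt_iff_kthSmall_lt {n : ℕ} (a : Fin n → ℝ) {k : ℕ} (hk : 1 ≤ k)
    (hkn : k ≤ n) (x : ℝ) :
    k ≤ (Finset.univ.filter fun i => a i < x).card ↔ kthSmall a k < x := by
  obtain ⟨j, rfl⟩ := Nat.exists_eq_add_of_le' hk
  exact lt_card_filter_iff_kthSmall a (fun y z hyz hz => hyz.trans_lt hz) hkn

theorem le_card_filter_gt_iff_lt_kthLarge {n : ℕ} (a : Fin n → ℝ) {k : ℕ} (hk : 1 ≤ k)
    (hkn : k ≤ n) (x : ℝ) :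
    k ≤ (Finset.univ.filter fun i => x < a i).card ↔ x < kthLarge a k := by
  have hsplit := Finset.card_filter_add_card_filter_not (s := Finset.univ) (fun i => a i ≤ x)
  simp only [not_le, Finset.card_univ, Fintype.card_fin] at hsplit
  rw [kthLarge_eq_kthSmall, ← not_le,
    ← lt_card_filter_iff_kthSmall a (fun y z hyz hz => hyz.trans hz) (by omega : n - k < n)]
  omega

theorem le_lowCount_add_highCount {n : ℕ} (S : Fin n → OInt) (x : ℝ) :
    n ≤ lowCount S x + highCount S x := by
  have hcover : (Finset.univ : Finset (Fin n)) ⊆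
      (Finset.univ.filter fun i => (S i).lo < x) ∪ (Finset.univ.filter fun i => x < (S i).hi) := by
    intro i _
    simp only [Finset.mem_union, Finset.mem_filter, Finset.mem_univ, true_and]
    by_contra! h
    exact (S i).lt.not_ge (h.2.trans h.1)
  simpa [lowCount, highCount] using (Finset.card_le_card hcover).trans (Finset.card_union_le _ _)

/-- for 1 ≤ p, 1 ≤ q, p + q ≤ n + 1, the p-th smallest lower endpoint is
strictly below the q-th largest upper endpoint, and f^{p,q}(S) is exactly the bounded
nonempty open interval between them. -/
theorem endpoint_rule_well_defined (n p q : ℕ) (hp : 1 ≤ p) (hq : 1 ≤ q)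
    (hpq : p + q ≤ n + 1) (S : Fin n → OInt) :
    kthSmall (fun i => (S i).lo) p < kthLarge (fun i => (S i).hi) q ∧
      eprSet p q S =
        Set.Ioo (kthSmall (fun i => (S i).lo) p) (kthLarge (fun i => (S i).hi) q) := by
  have hlow (x : ℝ) : p ≤ lowCount S x ↔ kthSmall (fun i => (S i).lo) p < x :=
    le_card_filter_lt_iff_kthSmall_lt _ hp (by omega) x
  have hhigh (x : ℝ) : q ≤ highCount S x ↔ x < kthLarge (fun i => (S i).hi) q :=
    le_card_filter_gt_iff_lt_kthLarge _ hq (by omega) x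
  refine ⟨?_, Set.ext fun x => and_congr (hlow x) (hhigh x)⟩
  by_contra! hle
  set y := kthLarge (fun i => (S i).hi) q
  have hy_low : lowCount S y < p := lt_of_not_ge fun h => hle.not_gt ((hlow y).mp h)
  have hy_high : highCount S y < q := lt_of_not_ge fun h => lt_irrefl y ((hhigh y).mp h)
  have hcover := le_lowCount_add_highCount S y
  omega
end

section
/- Every endpoint rule f^{p,q} (with 1 ≤ p, 1 ≤ q, p + q ≤ n + 1) satisfies responsiveness: if S_i ⊆ T_i for all i ∈ N, then f^{p,q}(S) ⊆ f^{p,q}(T). -/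
/-- endpoint rules satisfy responsiveness. -/
theorem endpoint_rule_responsive (n p q : ℕ) (hp : 1 ≤ p) (hq : 1 ≤ q)
    (hpq : p + q ≤ n + 1) (S T : Fin n → OInt)
    (hsub : ∀ i, (S i).toSet ⊆ (T i).toSet) :
    eprSet p q S ⊆ eprSet p q T := by
  intro x hx
  have hend : ∀ i, (T i).lo ≤ (S i).lo ∧ (S i).hi ≤ (T i).hi := by
    intro i
    have := hsub i
    rw [OInt.toSet, OInt.toSet, Set.Ioo_subset_Ioo_iff (S i).lt] at this
    exact this
  constructor
  · refine le_trans hx.1 (Finset.card_le_card ?_)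
    intro i hi
    simp only [Finset.mem_filter, Finset.mem_univ, true_and] at *
    exact lt_of_le_of_lt (hend i).1 hi
  · refine le_trans hx.2 (Finset.card_le_card ?_)
    intro i hi
    simp only [Finset.mem_filter, Finset.mem_univ, true_and] at *
    exact lt_of_lt_of_le hi (hend i).2
end

section
/- If an endpoint rule f^{p,q} is strongly neutral (equivariant under all strictly monotone bijections of ℝ, including decreasing ones), then p = q. -/
theorem cardlt (n a : ℕ) (h : a ≤ n) :
    (Finset.univ.filter fun i : Fin n => i.val < a).card = a := by
  have e : (Finset.univ.filter fun i : Fin n => i.val < a).card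
      = ((Finset.range n).filter fun i => i < a).card := by
    apply Finset.card_bij (fun i _ => i.val)
    · intro i hi; simp at hi ⊢; omega
    · intro i _ j _ hij; exact Fin.ext hij
    · intro b hb; simp at hb; exact ⟨⟨b, hb.1⟩, by simp [hb.2], rfl⟩
  have e2 : (Finset.range n).filter (fun i => i < a) = Finset.range a := by
    ext b; simp; omega
  rw [e, e2, Finset.card_range]

/-- If a < b within the constraints, the sets eprSet a b and eprSet b a differ somewhere. -/
theorem epr_ne {n a b : ℕ} (ha : 1 ≤ a) (hab : a < b) (hbn : b ≤ n) :
    ∃ S : Fin n → OInt, eprSet a b S ≠ eprSet b a S := by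
  refine ⟨fun i => ⟨if i.val < a then 0 else 2, 3, by split <;> norm_num⟩, ?_⟩
  have han : a ≤ n := le_trans (le_of_lt hab) hbn
  have hlow : lowCount (fun i : Fin n => (⟨if i.val < a then 0 else 2, 3, by split <;> norm_num⟩ : OInt)) 1 = a := by
    unfold lowCount
    rw [show (Finset.univ.filter fun i : Fin n =>
        (( ⟨if i.val < a then 0 else 2, 3, by split <;> norm_num⟩ : OInt)).lo < 1)
      = Finset.univ.filter fun i : Fin n => i.val < a from ?_]
    · exact cardlt n a han
    · apply Finset.filter_congr; intro i _
      by_cases h : i.val < a <;> simp [h] <;> norm_num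
  have hhigh : highCount (fun i : Fin n => (⟨if i.val < a then 0 else 2, 3, by split <;> norm_num⟩ : OInt)) 1 = n := by
    unfold highCount
    simp
  intro heq
  have h1 : (1:ℝ) ∈ eprSet a b (fun i : Fin n => (⟨if i.val < a then 0 else 2, 3, by split <;> norm_num⟩ : OInt)) := by
    constructor
    · rw [hlow]
    · rw [hhigh]; exact hbn
  rw [heq] at h1
  have := h1.1
  rw [hlow] at this
  omega

/-- a strongly neutral endpoint rule (equivariant under every strictly
monotone bijection of ℝ, increasing or decreasing) must be symmetric: p = q. -/
theorem strongly_neutral_endpoint_rule_symmetric (n p q : ℕ) (hn : 2 ≤ n)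
    (hp : 1 ≤ p) (hq : 1 ≤ q) (hpq : p + q ≤ n + 1)
    (hneut : ∀ φ : ℝ → ℝ, Function.Bijective φ → (StrictMono φ ∨ StrictAnti φ) →
      ∀ S T : Fin n → OInt, (∀ i, (T i).toSet = φ '' (S i).toSet) →
        φ '' eprSet p q S = eprSet p q T) :
    p = q := by
  -- the key: eprSet p q S = eprSet q p S for all S
  have key : ∀ S : Fin n → OInt, eprSet p q S = eprSet q p S := by
    intro S
    set φ : ℝ → ℝ := fun x => -x with hφ
    have hbij : Function.Bijective φ := ⟨neg_injective, fun x => ⟨-x, neg_neg x⟩⟩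
    have hanti : StrictAnti φ := fun a b h => by simpa [hφ] using neg_lt_neg h
    set T : Fin n → OInt := fun i => ⟨-(S i).hi, -(S i).lo, neg_lt_neg (S i).lt⟩ with hT
    have himg : ∀ i, (T i).toSet = φ '' (S i).toSet := by
      intro i
      simp [hT, OInt.toSet, hφ, Set.image_neg_eq_neg]
    have h1 := hneut φ hbij (Or.inr hanti) S T himg
    -- compute eprSet p q T = φ '' eprSet q p S
    have h2 : eprSet p q T = φ '' eprSet q p S := by
      ext x
      have hxmem : x ∈ φ '' eprSet q p S ↔ -x ∈ eprSet q p S := by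
        constructor
        · rintro ⟨y, hy, rfl⟩; simpa [hφ] using hy
        · intro h; exact ⟨-x, h, by simp [hφ]⟩
      rw [hxmem]
      have hl : lowCount T x = highCount S (-x) := by
        unfold lowCount highCount
        congr 1
        apply Finset.filter_congr; intro i _
        simp [hT]
        constructor <;> intro h <;> linarith
      have hh : highCount T x = lowCount S (-x) := by
        unfold lowCount highCount
        congr 1
        apply Finset.filter_congr; intro i _
        simp [hT]
        constructor <;> intro h <;> linarith
      constructor
      · rintro ⟨ha, hb⟩; exact ⟨by rwa [← hh], by rwa [← hl]⟩
      · rintro ⟨ha, hb⟩; exact ⟨by rwa [hl], by rwa [hh]⟩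
    rw [h2] at h1
    exact (Set.image_eq_image hbij.injective).mp h1
  by_contra hne
  rcases Nat.lt_or_ge p q with h | h
  · obtain ⟨S, hS⟩ := epr_ne hp h (show q ≤ n by omega)
    exact hS (key S)
  · have h' : q < p := by omega
    obtain ⟨S, hS⟩ := epr_ne hq h' (show p ≤ n by omega)
    exact hS (key S).symm
end

section
/- Strategyproofness and out-between-ness are equivalent: an aggregation rule f : Σ^N → Σ satisfies strategyproofness with respect to generalized single-peaked preferences if and only if for every profile S, every agent i, and every alternative report S'_i, f(S) lies between S_i and f(S'_i, S_{-i}) in the interval betweenness relation. -/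
/-- z is weakly between x and y. -/
def Btw3 (x z y : ℝ) : Prop := (x ≤ z ∧ z ≤ y) ∨ (y ≤ z ∧ z ≤ x)

/-- Interval betweenness: `IB R S T` means S ∈ B(R,T), i.e. inf S is weakly between
inf R and inf T, and sup S is weakly between sup R and sup T. -/
def IB (R S T : OInt) : Prop := Btw3 R.lo S.lo T.lo ∧ Btw3 R.hi S.hi T.hi

/-- A generalized single-peaked preference with peak `peak`: the peak is the unique
maximal element, and an interval between the peak and a third interval is preferred
to the third interval. -/
def SinglePeaked (pref : OInt → OInt → Prop) (peak : OInt) : Prop :=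
  (∀ T, pref T peak → T = peak) ∧
  (∀ R T, IB peak R T → pref peak R ∧ pref R T)

/-- Strategyproofness: reporting one's peak is always weakly preferred. -/
def Strategyproof {n : ℕ} (f : (Fin n → OInt) → OInt) : Prop :=
  ∀ (S : Fin n → OInt) (i : Fin n) (pref : OInt → OInt → Prop) (peak : OInt),
    SinglePeaked pref peak → pref (f (Function.update S i peak)) (f S)

/-- Out-between-ness: f(S) lies between S_i and f(S'_i, S_{-i}). -/
def OutBetween {n : ℕ} (f : (Fin n → OInt) → OInt) : Prop :=
  ∀ (S : Fin n → OInt) (i : Fin n) (S' : OInt), IB (S i) (f S) (f (Function.update S i S'))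

lemma OInt.ext' {a b : OInt} (h1 : a.lo = b.lo) (h2 : a.hi = b.hi) : a = b := by
  cases a; cases b; simp_all

lemma btw3_self (x y : ℝ) : Btw3 x x y := by
  rcases le_total x y with h | h
  · exact Or.inl ⟨le_rfl, h⟩
  · exact Or.inr ⟨h, le_rfl⟩

/-- strategyproofness and out-between-ness are equivalent. -/
theorem strategyproof_iff_outBetween (n : ℕ) (f : (Fin n → OInt) → OInt) :
    Strategyproof f ↔ OutBetween f := by
  constructor
  · intro hSP S i S'
    by_contra hIB
    set peak := S i with hpeak
    set T := Function.update S i S' with hT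
    have hST : Function.update T i peak = S := by
      simp [hT, hpeak, Function.update_idem]
    have hsp := hSP T i (fun A B => A = peak ∨ IB peak A B) peak ?_
    · rw [hST] at hsp
      rcases hsp with h | h
      · exact hIB ⟨h ▸ btw3_self _ _, h ▸ btw3_self _ _⟩
      · exact hIB h
    · constructor
      · rintro U (rfl | ⟨h1, h2⟩)
        · rfl
        · have hlo : U.lo = peak.lo := by
            rcases h1 with ⟨a, b⟩ | ⟨a, b⟩ <;> linarith
          have hhi : U.hi = peak.hi := by
            rcases h2 with ⟨a, b⟩ | ⟨a, b⟩ <;> linarith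
          exact OInt.ext' hlo hhi
      · intro R U h
        exact ⟨Or.inl rfl, Or.inr h⟩
  · intro hOB S i pref peak hsp
    have h := hOB (Function.update S i peak) i (S i)
    rw [Function.update_self, Function.update_idem, Function.update_eq_self] at h
    exact (hsp.2 _ _ h).2
end

section
/- Any aggregation rule f : Σ^N → Σ satisfying out-between-ness (equivalently, strategyproofness) aggregates endpoints independently: if inf S_i = inf T_i for all i, then inf f(S) = inf f(T); and if sup S_i = sup T_i for all i, then sup f(S) = sup f(T). -/
lemma btw3_eq {a x y : ℝ} (h1 : Btw3 a x y) (h2 : Btw3 a y x) : x = y := by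
  rcases h1 with ⟨h,h'⟩|⟨h,h'⟩ <;> rcases h2 with ⟨g,g'⟩|⟨g,g'⟩ <;> linarith

lemma one_step_lo {n : ℕ} {f : (Fin n → OInt) → OInt} (hf : OutBetween f)
    (S : Fin n → OInt) (i : Fin n) (S' : OInt) (h : (S i).lo = S'.lo) :
    (f S).lo = (f (Function.update S i S')).lo := by
  have h1 := (hf S i S').1
  have h2 := (hf (Function.update S i S') i (S i)).1
  rw [Function.update_self] at h2
  rw [Function.update_idem, Function.update_eq_self] at h2
  rw [h] at h1
  exact btw3_eq h1 h2

lemma one_step_hi {n : ℕ} {f : (Fin n → OInt) → OInt} (hf : OutBetween f)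
    (S : Fin n → OInt) (i : Fin n) (S' : OInt) (h : (S i).hi = S'.hi) :
    (f S).hi = (f (Function.update S i S')).hi := by
  have h1 := (hf S i S').2
  have h2 := (hf (Function.update S i S') i (S i)).2
  rw [Function.update_self] at h2
  rw [Function.update_idem, Function.update_eq_self] at h2
  rw [h] at h1
  exact btw3_eq h1 h2

/-- out-between-ness (equivalently strategyproofness) implies independent
aggregation of endpoints. -/
theorem outBetween_implies_independent_endpoints (n : ℕ) (f : (Fin n → OInt) → OInt)
    (hf : OutBetween f) :
    (∀ S T : Fin n → OInt, (∀ i, (S i).lo = (T i).lo) → (f S).lo = (f T).lo) ∧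
    (∀ S T : Fin n → OInt, (∀ i, (S i).hi = (T i).hi) → (f S).hi = (f T).hi) := by
  constructor
  · intro S T hST
    have key : ∀ (s : Finset (Fin n)) (S : Fin n → OInt), (∀ i, (S i).lo = (T i).lo) →
        (∀ i ∉ s, S i = T i) → (f S).lo = (f T).lo := by
      intro s
      induction s using Finset.induction_on with
      | empty =>
        intro S hlo hout
        have : S = T := funext fun i => hout i (Finset.notMem_empty i)
        rw [this]
      | @insert j s' hj ih =>
        intro S hlo hout
        have step := one_step_lo hf S j (T j) (hlo j)
        rw [step]
        apply ih
        · intro i; by_cases hij : i = j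
          · subst hij; simp
          · rw [Function.update_of_ne hij]; exact hlo i
        · intro i hi
          by_cases hij : i = j
          · subst hij; simp
          · rw [Function.update_of_ne hij]
            exact hout i (by simp [hij, hi])
    exact key Finset.univ S hST (fun i hi => absurd (Finset.mem_univ i) hi)
  · intro S T hST
    have key : ∀ (s : Finset (Fin n)) (S : Fin n → OInt), (∀ i, (S i).hi = (T i).hi) →
        (∀ i ∉ s, S i = T i) → (f S).hi = (f T).hi := by
      intro s
      induction s using Finset.induction_on with
      | empty =>
        intro S hhi hout
        have : S = T := funext fun i => hout i (Finset.notMem_empty i)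
        rw [this]
      | @insert j s' hj ih =>
        intro S hhi hout
        have step := one_step_hi hf S j (T j) (hhi j)
        rw [step]
        apply ih
        · intro i; by_cases hij : i = j
          · subst hij; simp
          · rw [Function.update_of_ne hij]; exact hhi i
        · intro i hi
          by_cases hij : i = j
          · subst hij; simp
          · rw [Function.update_of_ne hij]
            exact hout i (by simp [hij, hi])
    exact key Finset.univ S hST (fun i hi => absurd (Finset.mem_univ i) hi)
end

section
/- If f : Σ^N → Σ satisfies weak neutrality, then for every profile S the endpoints of f(S) are drawn from the endpoints of the individual intervals: inf f(S) ∈ {inf S_1,...,inf S_n} ∪ {sup S_1,...,sup S_n}, and likewise for sup f(S). -/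
lemma exists_move (F : Finset ℝ) (y : ℝ) (hy : y ∉ F) :
    ∃ φ : ℝ → ℝ, Function.Bijective φ ∧ StrictMono φ ∧ (∀ c ∈ F, φ c = c) ∧ φ y ≠ y := by
  obtain ⟨a, ha, haF⟩ : ∃ a, a < y ∧ ∀ c ∈ F, c < y → c ≤ a := by
    by_cases h : (F.filter fun c => c < y).Nonempty
    · refine ⟨(F.filter fun c => c < y).max' h, ?_, ?_⟩
      · have h2 := Finset.max'_mem _ h
        exact (Finset.mem_filter.1 h2).2
      · exact fun c hc hcy => Finset.le_max' (F.filter fun c => c < y) c (Finset.mem_filter.2 ⟨hc, hcy⟩)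
    · exact ⟨y - 1, by linarith, fun c hc hcy => absurd ⟨c, Finset.mem_filter.2 ⟨hc, hcy⟩⟩ h⟩
  obtain ⟨b, hb, hbF⟩ : ∃ b, y < b ∧ ∀ c ∈ F, y < c → b ≤ c := by
    by_cases h : (F.filter fun c => y < c).Nonempty
    · refine ⟨(F.filter fun c => y < c).min' h, ?_, ?_⟩
      · have h2 := Finset.min'_mem _ h
        exact (Finset.mem_filter.1 h2).2
      · exact fun c hc hcy => Finset.min'_le (F.filter fun c => y < c) c (Finset.mem_filter.2 ⟨hc, hcy⟩)
    · exact ⟨y + 1, by linarith, fun c hc hcy => absurd ⟨c, Finset.mem_filter.2 ⟨hc, hcy⟩⟩ h⟩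
  set g : ℝ → ℝ := fun x => max 0 (min (x - a) (b - x)) with hg
  have hgout : ∀ x, x ≤ a ∨ b ≤ x → g x = 0 := by
    intro x hx
    rcases hx with hx | hx
    · have : min (x - a) (b - x) ≤ 0 := le_trans (min_le_left _ _) (by linarith)
      simp [hg, max_eq_left this]
    · have : min (x - a) (b - x) ≤ 0 := le_trans (min_le_right _ _) (by linarith)
      simp [hg, max_eq_left this]
  have hdiff : ∀ x z, |g x - g z| ≤ |x - z| := by
    intro x z
    have h1 : |g x - g z| ≤ max |(0:ℝ) - 0| |min (x - a) (b - x) - min (z - a) (b - z)| :=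
      abs_max_sub_max_le_max _ _ _ _
    have h2 : |min (x - a) (b - x) - min (z - a) (b - z)| ≤ max |(x - a) - (z - a)| |(b - x) - (b - z)| :=
      abs_min_sub_min_le_max _ _ _ _
    have h3 : |min (x - a) (b - x) - min (z - a) (b - z)| ≤ |x - z| := by
      refine h2.trans (max_le (le_of_eq ?_) (le_of_eq ?_))
      · rw [show x - a - (z - a) = x - z from by ring]
      · rw [show b - x - (b - z) = -(x - z) from by ring, abs_neg]
    refine h1.trans (max_le ?_ h3)
    simp
  set φ : ℝ → ℝ := fun x => x + (1/2) * g x with hφ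
  have hmono : StrictMono φ := by
    intro x z hxz
    have h := hdiff z x
    rcases abs_le.1 h with ⟨h1, h2⟩
    rw [abs_of_pos (by linarith : (0:ℝ) < z - x)] at h1 h2
    simp only [hφ]
    nlinarith
  have hcontg : Continuous g :=
    continuous_const.max ((continuous_id.sub continuous_const).min
      (continuous_const.sub continuous_id))
  have hcont : Continuous φ := continuous_id.add (continuous_const.mul hcontg)
  have hsurj : Function.Surjective φ := by
    intro z
    rcases le_or_gt z a with hz | hz
    · exact ⟨z, by simp [hφ, hgout z (Or.inl hz)]⟩
    rcases le_or_gt b z with hz' | hz'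
    · exact ⟨z, by simp [hφ, hgout z (Or.inr hz')]⟩
    · have hφa : φ a = a := by simp [hφ, hgout a (Or.inl le_rfl)]
      have hφb : φ b = b := by simp [hφ, hgout b (Or.inr le_rfl)]
      have hmem : z ∈ Set.Icc (φ a) (φ b) := by rw [hφa, hφb]; exact ⟨hz.le, hz'.le⟩
      obtain ⟨w, _, hw⟩ := intermediate_value_Icc (by linarith : a ≤ b) hcont.continuousOn hmem
      exact ⟨w, hw⟩
  refine ⟨φ, ⟨hmono.injective, hsurj⟩, hmono, ?_, ?_⟩
  · intro c hc
    have hor : c ≤ a ∨ b ≤ c := by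
      rcases lt_trichotomy c y with h | h | h
      · exact Or.inl (haF c hc h)
      · exact absurd hc (h ▸ hy)
      · exact Or.inr (hbF c hc h)
    simp [hφ, hgout c hor]
  · have hge : g y = min (y - a) (b - y) := max_eq_right (le_min (by linarith) (by linarith))
    have hgy : 0 < g y := by rw [hge]; exact lt_min (by linarith) (by linarith)
    simp only [hφ]
    intro h
    nlinarith

lemma image_Ioo_of (φ : ℝ → ℝ) (hb : Function.Bijective φ) (hm : StrictMono φ) (a b : ℝ) :
    φ '' Set.Ioo a b = Set.Ioo (φ a) (φ b) := by
  ext z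
  constructor
  · rintro ⟨w, ⟨h1, h2⟩, rfl⟩
    exact ⟨hm h1, hm h2⟩
  · rintro ⟨h1, h2⟩
    obtain ⟨w, rfl⟩ := hb.2 z
    exact ⟨w, ⟨hm.lt_iff_lt.1 h1, hm.lt_iff_lt.1 h2⟩, rfl⟩

/-- if f is weakly neutral, then the endpoints of f(S) are drawn from the
endpoints (lower or upper) of the individual intervals. -/
theorem weakly_neutral_endpoints (n : ℕ) (f : (Fin n → OInt) → OInt)
    (hneut : ∀ φ : ℝ → ℝ, Function.Bijective φ → StrictMono φ →
      ∀ S T : Fin n → OInt, (∀ i, (T i).toSet = φ '' (S i).toSet) →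
        (f T).toSet = φ '' (f S).toSet)
    (S : Fin n → OInt) :
    ((f S).lo ∈ (Set.range fun i => (S i).lo) ∪ Set.range fun i => (S i).hi) ∧
    ((f S).hi ∈ (Set.range fun i => (S i).lo) ∪ Set.range fun i => (S i).hi) := by
  classical
  set F : Finset ℝ := (Finset.univ.image fun i => (S i).lo) ∪
    (Finset.univ.image fun i => (S i).hi) with hF
  have hfix : ∀ φ : ℝ → ℝ, Function.Bijective φ → StrictMono φ → (∀ c ∈ F, φ c = c) →
      φ (f S).lo = (f S).lo ∧ φ (f S).hi = (f S).hi := by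
    intro φ hbij hm hfixF
    have hT : ∀ i, (S i).toSet = φ '' (S i).toSet := by
      intro i
      show Set.Ioo (S i).lo (S i).hi = _
      rw [show φ '' (S i).toSet = Set.Ioo (φ (S i).lo) (φ (S i).hi) from image_Ioo_of φ hbij hm _ _,
        hfixF (S i).lo (Finset.mem_union_left _ (Finset.mem_image.2 ⟨i, Finset.mem_univ i, rfl⟩)),
        hfixF (S i).hi (Finset.mem_union_right _ (Finset.mem_image.2 ⟨i, Finset.mem_univ i, rfl⟩))]
    have heq := hneut φ hbij hm S S hT
    simp only [OInt.toSet] at heq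
    rw [image_Ioo_of φ hbij hm] at heq
    have hlt' : φ (f S).lo < φ (f S).hi := hm (f S).lt
    constructor
    · have h1 := csInf_Ioo (f S).lt
      have h2 := csInf_Ioo hlt'
      rw [heq] at h1
      rw [h1] at h2
      exact h2.symm
    · have h1 := csSup_Ioo (f S).lt
      have h2 := csSup_Ioo hlt'
      rw [heq] at h1
      rw [h1] at h2
      exact h2.symm
  have hmemF : ∀ y : ℝ, (∀ φ : ℝ → ℝ, Function.Bijective φ → StrictMono φ →
      (∀ c ∈ F, φ c = c) → φ y = y) → y ∈ F := by
    intro y hyp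
    by_contra hy
    obtain ⟨φ, hbij, hm, hfixF, hmove⟩ := exists_move F y hy
    exact hmove (hyp φ hbij hm hfixF)
  have toRange : ∀ y : ℝ, y ∈ F →
      y ∈ (Set.range fun i => (S i).lo) ∪ Set.range fun i => (S i).hi := by
    intro y hyF
    rcases Finset.mem_union.1 hyF with h | h
    · obtain ⟨i, _, rfl⟩ := Finset.mem_image.1 h
      exact Or.inl ⟨i, rfl⟩
    · obtain ⟨i, _, rfl⟩ := Finset.mem_image.1 h
      exact Or.inr ⟨i, rfl⟩
  exact ⟨toRange _ (hmemF _ fun φ hb hm hf => (hfix φ hb hm hf).1),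
    toRange _ (hmemF _ fun φ hb hm hf => (hfix φ hb hm hf).2)⟩
end

section
/- If f : Σ^N → Σ satisfies responsiveness and weak neutrality, then for every profile S, inf f(S) ∈ {inf S_1,...,inf S_n} and sup f(S) ∈ {sup S_1,...,sup S_n}. -/
lemma exists_up (F : Finset ℝ) (a : ℝ) (ha : a ∉ F) :
    ∃ φ : ℝ → ℝ, Function.Bijective φ ∧ StrictMono φ ∧ (∀ x, x ≤ φ x) ∧
      (∀ x ∈ F, φ x = x) ∧ a < φ a := by
  classical
  set L : Finset ℝ := insert (a - 1) (F.filter (fun y => y < a)) with hL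
  set R : Finset ℝ := insert (a + 1) (F.filter (fun y => a < y)) with hR
  set c : ℝ := L.max' ⟨a - 1, Finset.mem_insert_self _ _⟩ with hc
  set d : ℝ := R.min' ⟨a + 1, Finset.mem_insert_self _ _⟩ with hd
  have hca : c < a := by
    apply Finset.max'_lt_iff _ _ |>.2
    intro y hy
    rcases Finset.mem_insert.1 hy with h | h
    · linarith [h]
    · exact (Finset.mem_filter.1 h).2
  have had : a < d := by
    apply Finset.lt_min'_iff _ _ |>.2
    intro y hy
    rcases Finset.mem_insert.1 hy with h | h
    · linarith [h]
    · exact (Finset.mem_filter.1 h).2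
  have hcd : c < d := hca.trans had
  have hFcd : ∀ x ∈ F, x ≤ c ∨ d ≤ x := by
    intro x hx
    rcases lt_trichotomy x a with h | h | h
    · have hx' : x ∈ L := Finset.mem_insert_of_mem (Finset.mem_filter.2 ⟨hx, h⟩)
      exact Or.inl (Finset.le_max' L x hx')
    · exact absurd (h ▸ hx) ha
    · have hx' : x ∈ R := Finset.mem_insert_of_mem (Finset.mem_filter.2 ⟨hx, h⟩)
      exact Or.inr (Finset.min'_le R x hx')
  set h : ℝ → ℝ := fun x => max 0 (min (x - c) (d - x)) with hh
  set φ : ℝ → ℝ := fun x => x + h x / 2 with hφ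
  have hnn : ∀ x, 0 ≤ h x := fun x => le_max_left _ _
  have hlip : ∀ x y : ℝ, x ≤ y → h x ≤ h y + (y - x) := by
    intro x y hxy
    apply max_le
    · have := hnn y; linarith
    · have h1 : min (y - c) (d - y) ≤ h y := le_max_right _ _
      rcases le_total (y - c) (d - y) with h2 | h2
      · have : min (x - c) (d - x) ≤ x - c := min_le_left _ _
        have : (y : ℝ) - c = min (y - c) (d - y) := (min_eq_left h2).symm
        have := min_le_left (x - c) (d - x)
        nlinarith [min_le_left (x - c) (d - x), (min_eq_left h2)]
      · have : min (x - c) (d - x) ≤ d - x := min_le_right _ _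
        nlinarith [min_le_right (x - c) (d - x), (min_eq_right h2)]
  have hmono : StrictMono φ := by
    intro x y hxy
    have := hlip x y hxy.le
    simp only [hφ]
    linarith
  have hge : ∀ x, x ≤ φ x := by
    intro x; simp only [hφ]; have := hnn x; linarith
  have hidlow : ∀ x, x ≤ c → φ x = x := by
    intro x hx
    have : min (x - c) (d - x) ≤ 0 := le_trans (min_le_left _ _) (by linarith)
    simp only [hφ, hh, max_eq_left this]; ring
  have hidhigh : ∀ x, d ≤ x → φ x = x := by
    intro x hx
    have : min (x - c) (d - x) ≤ 0 := le_trans (min_le_right _ _) (by linarith)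
    simp only [hφ, hh, max_eq_left this]; ring
  have hcont : Continuous φ := by
    apply continuous_id.add (Continuous.div_const _ _)
    exact continuous_const.max ((continuous_id.sub continuous_const).min
      (continuous_const.sub continuous_id))
  have hsurj : Function.Surjective φ := by
    intro y
    rcases le_or_gt y c with hy | hy
    · exact ⟨y, hidlow y hy⟩
    rcases le_or_gt d y with hy' | hy'
    · exact ⟨y, hidhigh y hy'⟩
    have h1 : φ c = c := hidlow c le_rfl
    have h2 : φ d = d := hidhigh d le_rfl
    have := intermediate_value_Icc hcd.le hcont.continuousOn
    rw [h1, h2] at this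
    obtain ⟨x, _, hx⟩ := this ⟨hy.le, hy'.le⟩
    exact ⟨x, hx⟩
  refine ⟨φ, ⟨hmono.injective, hsurj⟩, hmono, hge, ?_, ?_⟩
  · intro x hx
    rcases hFcd x hx with h | h
    · exact hidlow x h
    · exact hidhigh x h
  · have : 0 < min (a - c) (d - a) := lt_min (by linarith) (by linarith)
    have : 0 < h a := lt_max_of_lt_right this
    simp only [hφ]; linarith

lemma exists_down (F : Finset ℝ) (a : ℝ) (ha : a ∉ F) :
    ∃ φ : ℝ → ℝ, Function.Bijective φ ∧ StrictMono φ ∧ (∀ x, φ x ≤ x) ∧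
      (∀ x ∈ F, φ x = x) ∧ φ a < a := by
  classical
  have ha' : -a ∉ F.image (fun x => -x) := by
    simp only [Finset.mem_image, neg_inj]
    rintro ⟨x, hx, rfl⟩; exact ha hx
  obtain ⟨ψ, hbij, hmono, hge, hfix, hlt⟩ := exists_up (F.image (fun x => -x)) (-a) ha'
  refine ⟨fun x => -ψ (-x), ?_, ?_, ?_, ?_, ?_⟩
  · constructor
    · intro x y hxy
      have := hbij.1 (neg_injective hxy)
      exact neg_injective this
    · intro y
      obtain ⟨x, hx⟩ := hbij.2 (-y)
      exact ⟨-x, by simp [hx]⟩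
  · intro x y hxy
    have := hmono (neg_lt_neg hxy)
    dsimp only
    linarith
  · intro x; have := hge (-x); dsimp only; linarith
  · intro x hx
    have : ψ (-x) = -x := hfix (-x) (Finset.mem_image.2 ⟨x, hx, rfl⟩)
    simp [this]
  · have := hlt; dsimp only; linarith

lemma image_Ioo_of_mono {φ : ℝ → ℝ} (hbij : Function.Bijective φ) (hmono : StrictMono φ)
    (u v : ℝ) : φ '' Set.Ioo u v = Set.Ioo (φ u) (φ v) := by
  have e : ℝ ≃o ℝ := StrictMono.orderIsoOfSurjective φ hmono hbij.2
  simpa using (StrictMono.orderIsoOfSurjective φ hmono hbij.2).image_Ioo u v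
/-- if f is responsive and weakly neutral, then inf f(S) is one of the
individual lower endpoints and sup f(S) is one of the individual upper endpoints. -/
theorem responsive_weakly_neutral_endpoints (n : ℕ) (f : (Fin n → OInt) → OInt)
    (hresp : ∀ S T : Fin n → OInt, (∀ i, (S i).toSet ⊆ (T i).toSet) →
      (f S).toSet ⊆ (f T).toSet)
    (hneut : ∀ φ : ℝ → ℝ, Function.Bijective φ → StrictMono φ →
      ∀ S T : Fin n → OInt, (∀ i, (T i).toSet = φ '' (S i).toSet) →
        (f T).toSet = φ '' (f S).toSet)
    (S : Fin n → OInt) :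
    ((f S).lo ∈ Set.range fun i => (S i).lo) ∧
    ((f S).hi ∈ Set.range fun i => (S i).hi) := by
  have hab := (f S).lt
  constructor
  · by_contra hcon
    have hne : ∀ i, (S i).lo ≠ (f S).lo := fun i h => hcon ⟨i, h⟩
    obtain ⟨φ, hbij, hmono, hge, hfix, hlt⟩ :=
      exists_up (Finset.image (fun i => (S i).lo) Finset.univ) (f S).lo
        (by simp only [Finset.mem_image, Finset.mem_univ, true_and, not_exists]; exact hne)
    have himg := image_Ioo_of_mono hbij hmono
    set T : Fin n → OInt := fun i => ⟨φ (S i).lo, φ (S i).hi, hmono (S i).lt⟩ with hTdef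
    have hT : ∀ i, (T i).toSet = φ '' (S i).toSet := fun i => by
      simp only [OInt.toSet, hTdef, himg]
    have h1 := hneut φ hbij hmono S T hT
    have h2 := hresp S T (fun i => by
      simp only [OInt.toSet, hTdef]
      exact Set.Ioo_subset_Ioo
        (le_of_eq (hfix (S i).lo (Finset.mem_image.2 ⟨i, Finset.mem_univ i, rfl⟩)))
        (hge _))
    rw [h1] at h2
    simp only [OInt.toSet, himg] at h2
    set a := (f S).lo
    set b := (f S).hi
    set x := min ((a + b) / 2) ((a + φ a) / 2) with hx
    have hax : a < x := lt_min (by linarith) (by linarith)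
    have hxb : x < b := lt_of_le_of_lt (min_le_left _ _) (by linarith)
    have h3 : φ a < x := (h2 ⟨hax, hxb⟩).1
    have h4 : x ≤ (a + φ a) / 2 := min_le_right _ _
    linarith
  · by_contra hcon
    have hne : ∀ i, (S i).hi ≠ (f S).hi := fun i h => hcon ⟨i, h⟩
    obtain ⟨φ, hbij, hmono, hle, hfix, hlt⟩ :=
      exists_down (Finset.image (fun i => (S i).hi) Finset.univ) (f S).hi
        (by simp only [Finset.mem_image, Finset.mem_univ, true_and, not_exists]; exact hne)
    have himg := image_Ioo_of_mono hbij hmono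
    set T : Fin n → OInt := fun i => ⟨φ (S i).lo, φ (S i).hi, hmono (S i).lt⟩ with hTdef
    have hT : ∀ i, (T i).toSet = φ '' (S i).toSet := fun i => by
      simp only [OInt.toSet, hTdef, himg]
    have h1 := hneut φ hbij hmono S T hT
    have h2 := hresp S T (fun i => by
      simp only [OInt.toSet, hTdef]
      exact Set.Ioo_subset_Ioo (hle _)
        (ge_of_eq (hfix (S i).hi (Finset.mem_image.2 ⟨i, Finset.mem_univ i, rfl⟩))))
    rw [h1] at h2
    simp only [OInt.toSet, himg] at h2
    set a := (f S).lo
    set b := (f S).hi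
    set x := max ((a + b) / 2) ((b + φ b) / 2) with hx
    have hax : a < x := lt_of_lt_of_le (by linarith) (le_max_left _ _)
    have hxb : x < b := max_lt (by linarith) (by linarith)
    have h3 : x < φ b := (h2 ⟨hax, hxb⟩).2
    have h4 : (b + φ b) / 2 ≤ x := le_max_right _ _
    linarith
end

section
/- The p,q-th endpoint rule equals the phantom-median rule with p phantoms equal to (∞,∞), q phantoms equal to (-∞,-∞), and n+1-p-q phantoms equal to (-∞,∞): for all profiles S ∈ Σ^N, f^{p,q}(S) = med(S ∘ P) for this choice of P. -/
/-- The order <̄ on the extended reals: x <̄ y iff x = -∞, or y = ∞, or x < y. -/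
def extLt (x y : EReal) : Prop := x = ⊥ ∨ y = ⊤ ∨ x < y

/-- An open interval (lo, hi) of the extended reals with lo <̄ hi; this includes the
half-bounded intervals and the degenerate unbounded intervals (-∞,-∞), (-∞,∞), (∞,∞). -/
structure EOInt where
  lo : EReal
  hi : EReal
  ok : extLt lo hi

open scoped Classical in
/-- Number of phantom intervals containing a point ≤ x. -/
noncomputable def lowCountE {m : ℕ} (P : Fin m → EOInt) (x : ℝ) : ℕ :=
  (Finset.univ.filter fun j => extLt (P j).lo (x : EReal)).card

open scoped Classical in
/-- Number of phantom intervals containing a point ≥ x. -/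
noncomputable def highCountE {m : ℕ} (P : Fin m → EOInt) (x : ℝ) : ℕ :=
  (Finset.univ.filter fun j => extLt (x : EReal) (P j).hi).card

/-- med(S ∘ P): the median rule applied to the 2n+1 intervals obtained by concatenating
the n real intervals S with the n+1 phantom intervals P: the set of x ∈ ℝ such that at
least n+1 of the intervals contain a point ≤ x, and at least n+1 contain a point ≥ x. -/
noncomputable def medPair {n : ℕ} (S : Fin n → OInt) (P : Fin (n + 1) → EOInt) : Set ℝ :=
  {x | n + 1 ≤ lowCount S x + lowCountE P x ∧ n + 1 ≤ highCount S x + highCountE P x}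

/-!
For real `x`, a phantom `(∞,∞)` contains points `≥ x` but none `≤ x`, `(-∞,-∞)` the reverse, and
`(-∞,∞)` both. So the phantoms add exactly `n+1-p` to the low count and `n+1-q` to the high count,
and the median thresholds `n+1` turn into the endpoint thresholds `p` and `q`.
-/

noncomputable def endpointPhantoms (n p q : ℕ) : Fin (n + 1) → EOInt := fun j =>
  if (j : ℕ) < p then ⟨⊤, ⊤, Or.inr (Or.inl rfl)⟩
  else if (j : ℕ) < n + 1 - q then ⟨⊥, ⊤, Or.inl rfl⟩
  else ⟨⊥, ⊥, Or.inl rfl⟩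

section endpointPhantoms

variable {n p q : ℕ}

theorem extLt_endpointPhantoms_lo_iff (x : ℝ) (j : Fin (n + 1)) :
    extLt (endpointPhantoms n p q j).lo x ↔ p ≤ j := by
  unfold endpointPhantoms extLt
  split_ifs <;> simp [EReal.coe_ne_top, *] <;> omega

theorem extLt_endpointPhantoms_hi_iff (hpq : p + q ≤ n + 1) (x : ℝ) (j : Fin (n + 1)) :
    extLt x (endpointPhantoms n p q j).hi ↔ (j : ℕ) < n + 1 - q := by
  unfold endpointPhantoms extLt
  split_ifs <;> simp [EReal.coe_ne_bot, *]
  omega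

theorem lowCountE_endpointPhantoms (x : ℝ) :
    lowCountE (endpointPhantoms n p q) x = n + 1 - p := by
  classical
  have hsplit := Finset.card_filter_add_card_filter_not (s := Finset.univ)
    fun j : Fin (n + 1) => (j : ℕ) < p
  simp only [not_lt, Finset.card_univ, Fintype.card_fin, Fin.card_filter_val_lt] at hsplit
  simp only [lowCountE, extLt_endpointPhantoms_lo_iff]
  omega

theorem highCountE_endpointPhantoms (hpq : p + q ≤ n + 1) (x : ℝ) :
    highCountE (endpointPhantoms n p q) x = n + 1 - q := by
  classical
  simp only [highCountE, extLt_endpointPhantoms_hi_iff hpq, Fin.card_filter_val_lt]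
  omega

end endpointPhantoms

theorem eprSet_eq_medPair_of_phantom_counts {n p q : ℕ} (S : Fin n → OInt)
    (P : Fin (n + 1) → EOInt) (hp : p ≤ n + 1) (hq : q ≤ n + 1)
    (hlow : ∀ x, lowCountE P x = n + 1 - p) (hhigh : ∀ x, highCountE P x = n + 1 - q) :
    eprSet p q S = medPair S P := by
  ext x
  simp only [eprSet, medPair, Set.mem_ofPred_eq, hlow, hhigh]
  omega

theorem endpoint_rule_eq_phantom_median_general (n p q : ℕ)
    (hpq : p + q ≤ n + 1) (S : Fin n → OInt) :
    eprSet p q S =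
      medPair S (fun j =>
        if (j : ℕ) < p then (⟨⊤, ⊤, Or.inr (Or.inl rfl)⟩ : EOInt)
        else if (j : ℕ) < n + 1 - q then (⟨⊥, ⊤, Or.inl rfl⟩ : EOInt)
        else (⟨⊥, ⊥, Or.inl rfl⟩ : EOInt)) :=
  eprSet_eq_medPair_of_phantom_counts S (endpointPhantoms n p q) (by omega) (by omega)
    lowCountE_endpointPhantoms (highCountE_endpointPhantoms hpq)

/-- the p,q-th endpoint rule equals the phantom-median rule with p phantoms
(∞,∞), q phantoms (-∞,-∞), and n+1-p-q phantoms (-∞,∞). -/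
theorem endpoint_rule_eq_phantom_median (n p q : ℕ) (hp : 1 ≤ p) (hq : 1 ≤ q)
    (hpq : p + q ≤ n + 1) (S : Fin n → OInt) :
    eprSet p q S =
      medPair S (fun j =>
        if (j : ℕ) < p then (⟨⊤, ⊤, Or.inr (Or.inl rfl)⟩ : EOInt)
        else if (j : ℕ) < n + 1 - q then (⟨⊥, ⊤, Or.inl rfl⟩ : EOInt)
        else (⟨⊥, ⊥, Or.inl rfl⟩ : EOInt)) :=
  endpoint_rule_eq_phantom_median_general n p q hpq S
end

section
/- If g : ℝ^n → ℝ is given by a median with n+1 fixed phantom values, g(x) = median(x_1,...,x_n, α_1,...,α_{n+1}) with α_j ∈ ℝ̄, and g is translation equivariant (g(x+b·1) = g(x)+b for all b ∈ ℝ), then every α_j ∈ {-∞, +∞}. -/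
/-! A finite phantom `α j = r` pins the median at `r` on a whole family of step vectors: if `B`
phantoms are `≥ r`, put `n + 1 - B` coordinates at or above `r` and the others at or below it.
Then at least `n + 1` of the `2n + 1` values are `≥ r` and at least `n + 1` are `≤ r`, the phantom
`r` itself being counted on both sides. The step vectors with values `r, r - 1` and `r + 1, r`
differ by a translation by `1`, yet both have median `r`, contradicting equivariance. -/

/-- The median (the (n+1)-th smallest) of the 2n+1 extended reals consisting of the n
real arguments x and the n+1 fixed phantom values α. -/
noncomputable def phantomMedian (n : ℕ) (α : Fin (n + 1) → EReal) (x : Fin n → ℝ) : EReal :=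
  (List.insertionSort (· ≤ ·)
    (List.ofFn (fun i => ((x i : EReal))) ++ List.ofFn α)).getD n ⊥

open Finset

theorem List.countP_ofFn {α : Type*} {m : ℕ} (f : Fin m → α) (p : α → Prop) [DecidablePred p] :
    (List.ofFn f).countP (fun a => decide (p a)) = #{i | p (f i)} := by
  rw [← Multiset.coe_countP, ← Fin.univ_val_map, Multiset.countP_map]
  rfl

section OrderStatistics

variable {α : Type*} [Preorder α] [DecidableLE α] {m : ℕ} {f : Fin m → α}

theorem Monotone.le_of_lt_card_filter_le (hf : Monotone f) {y : α} {k : Fin m}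
    (hk : (k : ℕ) < #{i | f i ≤ y}) : f k ≤ y := by
  by_contra hky
  have hsub : ({i | f i ≤ y} : Finset (Fin m)) ⊆ Iio k := fun i hi => by
    simp only [mem_filter_univ] at hi
    exact mem_Iio.2 (lt_of_not_ge fun hki => hky ((hf hki).trans hi))
  have := card_le_card hsub
  rw [Fin.card_Iio] at this
  omega

theorem Monotone.le_of_le_add_card_filter_ge (hf : Monotone f) {y : α} {k : Fin m}
    (hk : m ≤ k + #{i | y ≤ f i}) : y ≤ f k := by
  by_contra hyk
  have hsub : ({i | y ≤ f i} : Finset (Fin m)) ⊆ Ioi k := fun i hi => by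
    simp only [mem_filter_univ] at hi
    exact mem_Ioi.2 (lt_of_not_ge fun hik => hyk (hi.trans (hf hik)))
  have := card_le_card hsub
  rw [Fin.card_Ioi] at this
  omega

end OrderStatistics

theorem List.getD_insertionSort_eq_of_lt_countP {α : Type*} [LinearOrder α] {l : List α}
    {n : ℕ} (hl : l.length = 2 * n + 1) {r : α} (d : α)
    (hle : n < l.countP (· ≤ r)) (hge : n < l.countP (r ≤ ·)) :
    (l.insertionSort (· ≤ ·)).getD n d = r := by
  set L := l.insertionSort (· ≤ ·)
  have hperm : L.Perm l := List.perm_insertionSort _ _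
  have hmono : Monotone L.get := List.sortedLE_insertionSort
  have hcount (p : α → Prop) [DecidablePred p] :
      l.countP (fun a => decide (p a)) = #{i | p (L.get i)} := by
    rw [← hperm.countP_eq, ← List.countP_ofFn, List.ofFn_get]
  have hlen : L.length = l.length := hperm.length_eq
  have hn : n < L.length := by omega
  rw [List.getD_eq_getElem _ _ hn]
  refine le_antisymm (hmono.le_of_lt_card_filter_le (k := ⟨n, hn⟩) ?_)
    (hmono.le_of_le_add_card_filter_ge (k := ⟨n, hn⟩) ?_)
  · exact hle.trans_eq (hcount (· ≤ r))
  · have := hge.trans_eq (hcount (r ≤ ·))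
    show L.length ≤ n + _
    omega

theorem phantomMedian_eq_of_lt_card {n : ℕ} {α : Fin (n + 1) → EReal} {x : Fin n → ℝ}
    {r : EReal} (hle : n < #{i | (x i : EReal) ≤ r} + #{k | α k ≤ r})
    (hge : n < #{i | r ≤ (x i : EReal)} + #{k | r ≤ α k}) :
    phantomMedian n α x = r := by
  unfold phantomMedian
  apply List.getD_insertionSort_eq_of_lt_countP
  · simp only [List.length_append, List.length_ofFn]
    omega
  · rwa [List.countP_append, List.countP_ofFn, List.countP_ofFn]
  · rwa [List.countP_append, List.countP_ofFn, List.countP_ofFn]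

theorem card_lt_card_filter_le_add_card_filter_ge {ι α : Type*} [Fintype ι] [DecidableEq ι]
    [LinearOrder α] (f : ι → α) {j : ι} : Fintype.card ι < #{k | f k ≤ f j} + #{k | f j ≤ f k} := by
  rw [← card_union_add_card_inter, ← filter_or, ← filter_and]
  have hunion : #{k | f k ≤ f j ∨ f j ≤ f k} = Fintype.card ι := by
    rw [filter_true_of_mem fun k _ => le_total _ _, card_univ]
  have hinter : 0 < #{k | f k ≤ f j ∧ f j ≤ f k} :=
    card_pos.2 ⟨j, (mem_filter_univ j).2 ⟨le_rfl, le_rfl⟩⟩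
  omega

theorem phantomMedian_step_eq {n : ℕ} {α : Fin (n + 1) → EReal} {j : Fin (n + 1)} {r lo hi : ℝ}
    (hj : α j = r) (hlo : lo ≤ r) (hhi : r ≤ hi) :
    phantomMedian n α
      (fun i => if (i : ℕ) < n + 1 - #{k | (r : EReal) ≤ α k} then hi else lo) = r := by
  set t := n + 1 - #{k | (r : EReal) ≤ α k} with ht
  have hAB : n + 1 < #{k | α k ≤ r} + #{k | (r : EReal) ≤ α k} := by
    simpa only [hj, Fintype.card_fin] using card_lt_card_filter_le_add_card_filter_ge α (j := j)
  have hA : #{k | α k ≤ r} ≤ n + 1 := (card_filter_le _ _).trans_eq (by simp)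
  have hB : #{k | (r : EReal) ≤ α k} ≤ n + 1 := (card_filter_le _ _).trans_eq (by simp)
  have hsplit :=
    card_filter_add_card_filter_not (s := (univ : Finset (Fin n))) (fun i => (i : ℕ) < t)
  simp only [Fin.card_filter_val_lt, not_lt, card_univ, Fintype.card_fin] at hsplit
  have hhigh : #{i : Fin n | (i : ℕ) < t} ≤
      #{i : Fin n | (r : EReal) ≤ ((if (i : ℕ) < t then hi else lo : ℝ) : EReal)} :=
    card_le_card fun i hmem => by
      simp only [mem_filter_univ] at hmem ⊢
      simpa [hmem] using hhi
  have hlow : #{i : Fin n | t ≤ (i : ℕ)} ≤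
      #{i : Fin n | ((if (i : ℕ) < t then hi else lo : ℝ) : EReal) ≤ r} :=
    card_le_card fun i hmem => by
      simp only [mem_filter_univ] at hmem ⊢
      simpa [not_lt.2 hmem] using hlo
  rw [Fin.card_filter_val_lt] at hhigh
  apply phantomMedian_eq_of_lt_card <;> omega

/-- if g : ℝ^n → ℝ is a median with n+1 fixed phantom values and g is
translation equivariant, then every phantom is -∞ or +∞. -/
theorem translation_equivariant_phantoms_infinite (n : ℕ) (g : (Fin n → ℝ) → ℝ)
    (α : Fin (n + 1) → EReal)
    (hg : ∀ x : Fin n → ℝ, (g x : EReal) = phantomMedian n α x)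
    (heq : ∀ (x : Fin n → ℝ) (b : ℝ), g (fun i => x i + b) = g x + b) :
    ∀ j, α j = ⊥ ∨ α j = ⊤ := by
  intro j
  by_contra! hj
  obtain ⟨r, hr⟩ : ∃ r : ℝ, α j = r := ⟨(α j).toReal, (EReal.coe_toReal hj.2 hj.1).symm⟩
  set t := n + 1 - #{k | (r : EReal) ≤ α k}
  set x : Fin n → ℝ := fun i => if (i : ℕ) < t then r else r - 1
  have hx : g x = r :=
    EReal.coe_injective ((hg x).trans (phantomMedian_step_eq hr (by linarith) le_rfl))
  have hx1 : g (fun i => x i + 1) = r := by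
    have hshift : (fun i => x i + 1) = fun i : Fin n => if (i : ℕ) < t then r + 1 else r := by
      funext i
      split_ifs <;> simp [x, *]
    rw [hshift]
    exact EReal.coe_injective ((hg _).trans (phantomMedian_step_eq hr le_rfl (by linarith)))
  linarith [heq x 1]
end
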